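/- Let H ⊆ ℝⁿ be a rational half-line with origin v ∈ ℚⁿ, and let H_reg be the set of rational points h ∈ H such that the segment conv(v,h) is Farey-regular. Then any two distinct points of H_reg have different denominators. -/

import Mathlib

open scoped BigOperators

noncomputable section

/-- Embedding of a rational point of ℚⁿ into ℝⁿ. -/
def toR {n : ℕ} (x : Fin n → ℚ) : Fin n → ℝ := fun i => (x i : ℝ)

/-- Least common denominator of a rational point. -/
def den {n : ℕ} (x : Fin n → ℚ) : ℕ := Finset.univ.lcm fun i => (x i).den

/-- Homogeneous correspondent x̃ = (den(x)·x, den(x)) ∈ ℤ^{n+1}. -/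
def homog {n : ℕ} (x : Fin n → ℚ) : Fin (n + 1) → ℤ :=
  Fin.snoc (fun i => ((den x : ℚ) * x i).num) (den x)

/-- A rational d-simplex, given by its vertices, is Farey-regular if the vertices are
affinely independent and their homogeneous correspondents extend to a ℤ-basis of ℤ^{n+1}. -/
def IsFareyRegular {n d : ℕ} (v : Fin (d + 1) → Fin n → ℚ) : Prop :=
  AffineIndependent ℝ (fun i => toR (v i)) ∧
  ∃ (b : Module.Basis (Fin (n + 1)) ℤ (Fin (n + 1) → ℤ)) (ι : Fin (d + 1) → Fin (n + 1)),
    Function.Injective ι ∧ ∀ i, b (ι i) = homog (v i)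

/-- A rational segment conv(a,b) is Farey-regular. -/
def SegRegular {n : ℕ} (a b : Fin n → ℚ) : Prop := IsFareyRegular ![a, b]

/-- Maps in GL(n,ℤ) ⋉ ℤⁿ : x ↦ Mx + t with M an integer matrix with det ±1. -/
def IsUnimodularAffine {n : ℕ} (γ : (Fin n → ℝ) → Fin n → ℝ) : Prop :=
  ∃ (M : Matrix (Fin n) (Fin n) ℤ) (t : Fin n → ℤ), IsUnit M.det ∧
    ∀ x, γ x = fun i => (∑ j, (M i j : ℝ) * x j) + (t i : ℝ)

/-- A rational affine space: an intersection of rational affine hyperplanes of ℝⁿ. -/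
def IsRatAffineSpace {n : ℕ} (F : Set (Fin n → ℝ)) : Prop :=
  ∃ (ι : Type) (p : ι → Fin n → ℚ) (c : ι → ℚ), (∀ i, p i ≠ 0) ∧
    F = ⋂ i, {z | (∑ j, (p i j : ℝ) * z j) = (c i : ℝ)}

/-- Affine dimension of a subset of ℝⁿ. -/
def affDim {n : ℕ} (F : Set (Fin n → ℝ)) : ℕ :=
  Module.finrank ℝ (vectorSpan ℝ F)

/-- d_F: least denominator of a rational point of F. -/
def dF {n : ℕ} (F : Set (Fin n → ℝ)) : ℕ :=
  sInf {d | ∃ v : Fin n → ℚ, toR v ∈ F ∧ den v = d}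

/-- c_F: least denominator of a rational point v such that conv(v,v₀,…,v_e) is a
Farey-regular (e+1)-simplex for some v₀,…,v_e ∈ F ∩ ℚⁿ (e = dim F < n); c_F = 1 if dim F = n. -/
def cF {n : ℕ} (F : Set (Fin n → ℝ)) : ℕ :=
  if affDim F = n then 1 else
  sInf {c | ∃ (v : Fin n → ℚ) (w : Fin (affDim F + 1) → Fin n → ℚ),
    (∀ i, toR (w i) ∈ F) ∧ IsFareyRegular (Fin.cons v w) ∧ den v = c}

/-- Euclidean distance on ℝⁿ. -/
def eudist {n : ℕ} (x y : Fin n → ℝ) : ℝ := Real.sqrt (∑ i, (x i - y i) ^ 2)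

/-- The sequence a = x₀, x₁, …, x_{u+1} = b of consecutive vertices of the
Hirzebruch–Jung triangulation of the rational segment conv(a,b): each x_{i+1} is the
farthest rational point z from xᵢ in conv(a,b) such that conv(xᵢ,z) is Farey-regular. -/
def IsHJSeq {n : ℕ} (a b : Fin n → ℚ) {u : ℕ} (x : Fin (u + 2) → Fin n → ℚ) : Prop :=
  x 0 = a ∧ x (Fin.last (u + 1)) = b ∧
  ∀ i : Fin (u + 1),
    toR (x i.succ) ∈ segment ℝ (toR a) (toR b) ∧
    SegRegular (x i.castSucc) (x i.succ) ∧
    ∀ z : Fin n → ℚ, toR z ∈ segment ℝ (toR a) (toR b) →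
      SegRegular (x i.castSucc) z →
      eudist (toR z) (toR (x i.castSucc)) ≤ eudist (toR (x i.succ)) (toR (x i.castSucc))

/-- A regular triangulation of the rational segment conv(a,b), described by its
consecutive vertices a = y₀, …, y_{k+1} = b: consecutive 1-simplexes are Farey-regular. -/
def IsRegTriSeq {n : ℕ} (a b : Fin n → ℚ) {k : ℕ} (y : Fin (k + 2) → Fin n → ℚ) : Prop :=
  y 0 = a ∧ y (Fin.last (k + 1)) = b ∧
  ∀ i : Fin (k + 1),
    toR (y i.succ) ∈ segment ℝ (toR (y i.castSucc)) (toR b) ∧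
    SegRegular (y i.castSucc) (y i.succ)

/-- A rational half-line with rational origin v: {v + t(w - v) : t ≥ 0} for some rational w ≠ v. -/
def IsRatHalfLine {n : ℕ} (H : Set (Fin n → ℝ)) (v : Fin n → ℚ) : Prop :=
  ∃ w : Fin n → ℚ, w ≠ v ∧
    H = {P | ∃ t : ℝ, 0 ≤ t ∧ P = fun i => toR v i + t * (toR w i - toR v i)}

/-!
Write `p • (h - v) = q • (k - v)` with positive integers `p, q`. If `den h = den k = d` and
`e = den v`, this lifts to the homogeneous relation `(e q) • k̃ = (e p) • h̃ + ((q - p) d) • ṽ`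
in `ℤ^{n+1}`. As `ṽ, h̃` belong to a `ℤ`-basis, the `h̃`-coordinate `e p` of `(e q) • k̃` is
divisible by `e q`, so `q ∣ p`; by symmetry `p ∣ q`, whence `p = q` and `h = k`.
Positivity of `p, q` is where the half-line is needed: on a full line `v = 0`, `h = 1`, `k = -1`
is a counterexample.
-/

theorem Module.Basis.dvd_of_smul_eq_add {ι R M : Type*} [Semiring R] [AddCommMonoid M]
    [Module R M] (b : Module.Basis ι R M) {i j : ι} (hij : i ≠ j) {N a c : R} {z : M}
    (h : N • z = a • b i + c • b j) : N ∣ a :=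
  ⟨b.repr z i, by simpa [Finsupp.single_apply, hij.symm] using (congrArg (b.repr · i) h).symm⟩

theorem den_pos {n : ℕ} (x : Fin n → ℚ) : 0 < den x :=
  Nat.pos_of_ne_zero <| Finset.lcm_ne_zero_iff.mpr fun i _ => (x i).den_nz

theorem intCast_num_den_mul {n : ℕ} (x : Fin n → ℚ) (i : Fin n) :
    ((((den x : ℚ) * x i).num : ℤ) : ℚ) = den x * x i := by
  obtain ⟨c, hc⟩ : (x i).den ∣ den x := Finset.dvd_lcm (Finset.mem_univ i)
  have : (den x : ℚ) * x i = ((c * (x i).num : ℤ) : ℚ) := by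
    rw [hc]; push_cast; rw [← Rat.den_mul_eq_num]; ring
  rw [this, Rat.num_intCast]

theorem intCast_homog {n : ℕ} (x : Fin n → ℚ) (c : Fin (n + 1)) :
    ((homog x c : ℤ) : ℚ) = den x * (Fin.snoc x 1 : Fin (n + 1) → ℚ) c := by
  refine Fin.lastCases ?_ (fun i => ?_) c
  · simp [homog]
  · simp [homog, intCast_num_den_mul]

theorem homog_smul_eq_add {n : ℕ} {v h k : Fin n → ℚ} (hden : den h = den k) {p q : ℤ}
    (hpq : (p : ℚ) • (h - v) = (q : ℚ) • (k - v)) :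
    (den v * q) • homog k = (den v * p) • homog h + ((q - p) * den h) • homog v := by
  funext c
  apply Int.cast_injective (α := ℚ)
  simp only [Pi.add_apply, Pi.smul_apply, smul_eq_mul]
  push_cast
  simp only [intCast_homog, ← hden]
  refine Fin.lastCases ?_ (fun i => ?_) c
  · simp only [Fin.snoc_last]; ring
  · have := congrFun hpq i
    simp only [Pi.smul_apply, Pi.sub_apply, smul_eq_mul] at this
    simp only [Fin.snoc_castSucc]
    linear_combination -(den v : ℚ) * den h * this

theorem SegRegular.ne {n : ℕ} {a b : Fin n → ℚ} (hab : SegRegular a b) : a ≠ b := by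
  intro e
  have := hab.1.injective.ne (show (0 : Fin 2) ≠ 1 by decide)
  simp [e] at this

theorem SegRegular.dvd_of_smul_sub_eq {n : ℕ} {v h k : Fin n → ℚ} (hreg : SegRegular v h)
    (hden : den h = den k) {p q : ℤ} (hpq : (p : ℚ) • (h - v) = (q : ℚ) • (k - v)) : q ∣ p := by
  obtain ⟨-, b, ι, hι, hb⟩ := hreg
  have hrel : (den v * q) • homog k = (den v * p) • b (ι 1) + ((q - p) * den h) • b (ι 0) := by
    simpa [hb] using homog_smul_eq_add hden hpq
  have hv : (den v : ℤ) ≠ 0 := by exact_mod_cast (den_pos v).ne'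
  exact (mul_dvd_mul_iff_left hv).mp (b.dvd_of_smul_eq_add (hι.ne (by decide)) hrel)

theorem exists_rat_smul_of_toR_eq_smul {n : ℕ} {x u : Fin n → ℚ} (hu : u ≠ 0) {s : ℝ}
    (hs : toR x = s • toR u) : ∃ t : ℚ, (t : ℝ) = s ∧ x = t • u := by
  obtain ⟨i, hi⟩ := Function.ne_iff.mp hu
  have hs' (j : Fin n) : (x j : ℝ) = s * u j := congrFun hs j
  have hi' : (u i : ℝ) ≠ 0 := by exact_mod_cast hi
  have ht : ((x i / u i : ℚ) : ℝ) = s := by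
    push_cast; rw [div_eq_iff hi', hs' i]
  refine ⟨x i / u i, ht, funext fun j => ?_⟩
  have := hs' j
  rw [← ht] at this
  exact_mod_cast this

theorem IsRatHalfLine.exists_sub_eq_smul {n : ℕ} {H : Set (Fin n → ℝ)} {v : Fin n → ℚ}
    (hH : IsRatHalfLine H v) :
    ∃ u : Fin n → ℚ, ∀ x : Fin n → ℚ, toR x ∈ H → ∃ t : ℚ, 0 ≤ t ∧ x - v = t • u := by
  obtain ⟨w, hwv, rfl⟩ := hH
  refine ⟨w - v, fun x ⟨s, hs, hx⟩ => ?_⟩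
  have hxs : toR (x - v) = s • toR (w - v) := by
    funext i
    have := congrFun hx i
    simp only [toR, Pi.sub_apply, Pi.smul_apply, smul_eq_mul] at this ⊢
    push_cast
    linarith
  obtain ⟨t, rfl, ht⟩ := exists_rat_smul_of_toR_eq_smul (sub_ne_zero.mpr hwv) hxs
  exact ⟨t, by exact_mod_cast hs, ht⟩

theorem Rat.exists_pos_int_mul_eq_mul {a b : ℚ} (ha : 0 < a) (hb : 0 < b) :
    ∃ p q : ℤ, 0 < p ∧ 0 < q ∧ (p : ℚ) * a = q * b := by
  refine ⟨b.num * a.den, a.num * b.den, by positivity, by positivity, ?_⟩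
  push_cast
  rw [← Rat.den_mul_eq_num a, ← Rat.den_mul_eq_num b]
  ring

/-- On a rational half-line H with origin v, any two distinct points of
H_reg = {h ∈ H ∩ ℚⁿ : conv(v,h) Farey-regular} have different denominators. -/
theorem halfline_reg_den_injective {n : ℕ}
    (H : Set (Fin n → ℝ)) (v : Fin n → ℚ) (hH : IsRatHalfLine H v)
    (h k : Fin n → ℚ)
    (hh : toR h ∈ H) (hk : toR k ∈ H)
    (hreg : SegRegular v h) (kreg : SegRegular v k)
    (hne : h ≠ k) :
    den h ≠ den k := by
  intro hden
  obtain ⟨u, hu⟩ := hH.exists_sub_eq_smul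
  have exists_pos_param {x : Fin n → ℚ} (hx : toR x ∈ H) (hreg : SegRegular v x) :
      ∃ t : ℚ, 0 < t ∧ x - v = t • u := by
    obtain ⟨t, ht, hxt⟩ := hu x hx
    refine ⟨t, ht.lt_of_ne ?_, hxt⟩
    rintro rfl
    exact hreg.ne (sub_eq_zero.mp (by simpa using hxt)).symm
  obtain ⟨t₁, ht₁, eh⟩ := exists_pos_param hh hreg
  obtain ⟨t₂, ht₂, ek⟩ := exists_pos_param hk kreg
  obtain ⟨p, q, hp, hq, hpq⟩ := Rat.exists_pos_int_mul_eq_mul ht₁ ht₂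
  have hrel : (p : ℚ) • (h - v) = (q : ℚ) • (k - v) := by
    rw [eh, ek, smul_smul, smul_smul, hpq]
  obtain rfl : p = q := Int.dvd_antisymm hp.le hq.le
    (kreg.dvd_of_smul_sub_eq hden.symm hrel.symm) (hreg.dvd_of_smul_sub_eq hden hrel)
  exact hne (sub_left_inj.mp (smul_right_injective _ (by exact_mod_cast hp.ne') hrel))
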